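/- arXiv:1811.03968 — 3 statements merged into one kernel-verified Lean document; each statement's English description precedes it below -/
import Mathlib

section
/- Let G be a finite simple undirected graph on vertex set V with minimum degree at least 1 that is doubly-stochastic, and let S, A, B be pairwise disjoint subsets of V with S ∪ A ∪ B = V. Then ∑_{i ∈ S} (1/d_i)|N(i) ∩ B| ≤ ∑_{i ∈ B} (1/d_i)|N(i) ∩ S| + ∑_{i ∈ A} (1/d_i)|N(i) ∩ S|. -/
open Finset SimpleGraph

private lemma nbr_inter_eq {V : Type*} [Fintype V] [DecidableEq V]
    (G : SimpleGraph V) [DecidableRel G.Adj] (i : V) (X : Finset V) :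
    G.neighborFinset i ∩ X = X.filter (fun j => G.Adj i j) := by
  ext j; simp [SimpleGraph.mem_neighborFinset, and_comm]

private lemma swap_sum {V : Type*} [Fintype V] [DecidableEq V]
    (G : SimpleGraph V) [DecidableRel G.Adj] (X Y : Finset V) (f : V → V → ℝ) :
    ∑ i ∈ X, ∑ j ∈ G.neighborFinset i ∩ Y, f i j
      = ∑ j ∈ Y, ∑ i ∈ G.neighborFinset j ∩ X, f i j := by
  simp only [nbr_inter_eq, Finset.sum_filter]
  rw [Finset.sum_comm]
  apply Finset.sum_congr rfl; intro j _
  apply Finset.sum_congr rfl; intro i _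
  simp [G.adj_comm i j]

/-- On a doubly-stochastic graph with minimum degree at least 1, for any partition of the
vertex set into pairwise disjoint sets `S`, `A`, `B`:
`∑_{i ∈ S} (1/d_i)|N(i) ∩ B| ≤ ∑_{i ∈ B} (1/d_i)|N(i) ∩ S| + ∑_{i ∈ A} (1/d_i)|N(i) ∩ S|`. -/
theorem doubly_stochastic_partition_flow_bound
    {V : Type*} [Fintype V] [DecidableEq V]
    (G : SimpleGraph V) [DecidableRel G.Adj]
    (hdeg : ∀ i : V, 1 ≤ G.degree i)
    (hds : ∀ i : V, ∑ j ∈ G.neighborFinset i, (1 : ℝ) / (G.degree j) = 1)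
    (S A B : Finset V)
    (hSA : Disjoint S A) (hSB : Disjoint S B) (hAB : Disjoint A B)
    (hcover : S ∪ A ∪ B = Finset.univ) :
    ∑ i ∈ S, (1 : ℝ) / (G.degree i) * ((G.neighborFinset i ∩ B).card : ℝ)
      ≤ ∑ i ∈ B, (1 : ℝ) / (G.degree i) * ((G.neighborFinset i ∩ S).card : ℝ)
        + ∑ i ∈ A, (1 : ℝ) / (G.degree i) * ((G.neighborFinset i ∩ S).card : ℝ) := by
  set a : V → ℝ := fun i => (1 : ℝ) / (G.degree i) with ha
  have hanonneg : ∀ i, 0 ≤ a i := by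
    intro i; positivity
  -- rewrite products as inner sums
  have hcard : ∀ (X : Finset V) (i : V),
      (1 : ℝ) / (G.degree i) * ((G.neighborFinset i ∩ X).card : ℝ)
        = ∑ _j ∈ G.neighborFinset i ∩ X, a i := by
    intro X i
    rw [Finset.sum_const, nsmul_eq_mul, mul_comm]
  simp only [hcard]
  -- swap the two RHS sums
  rw [swap_sum G B S (fun i _ => a i), swap_sum G A S (fun i _ => a i)]
  -- per-vertex partition of neighbor sums
  have hsplit : ∀ (i : V) (f : V → ℝ),
      ∑ j ∈ G.neighborFinset i, f j
        = ∑ j ∈ G.neighborFinset i ∩ S, f j + ∑ j ∈ G.neighborFinset i ∩ A, f j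
          + ∑ j ∈ G.neighborFinset i ∩ B, f j := by
    intro i f
    have h1 : G.neighborFinset i = G.neighborFinset i ∩ S ∪ G.neighborFinset i ∩ A
        ∪ G.neighborFinset i ∩ B := by
      rw [← Finset.inter_union_distrib_left, ← Finset.inter_union_distrib_left, hcover,
        Finset.inter_univ]
    have hd1 : Disjoint (G.neighborFinset i ∩ S) (G.neighborFinset i ∩ A) :=
      Finset.disjoint_of_subset_left Finset.inter_subset_right
        (Finset.disjoint_of_subset_right Finset.inter_subset_right hSA)
    have hd2 : Disjoint (G.neighborFinset i ∩ S ∪ G.neighborFinset i ∩ A)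
        (G.neighborFinset i ∩ B) := by
      refine Finset.disjoint_of_subset_right Finset.inter_subset_right ?_
      exact Finset.disjoint_union_left.mpr
        ⟨Finset.disjoint_of_subset_left Finset.inter_subset_right hSB,
         Finset.disjoint_of_subset_left Finset.inter_subset_right hAB⟩
    conv_lhs => rw [h1]
    rw [Finset.sum_union hd2, Finset.sum_union hd1]
  -- per-vertex key equation
  have hkey : ∀ i : V,
      ∑ j ∈ G.neighborFinset i ∩ S, a j + ∑ j ∈ G.neighborFinset i ∩ A, a j
        + ∑ j ∈ G.neighborFinset i ∩ B, a j
      = ∑ j ∈ G.neighborFinset i ∩ S, a i + ∑ j ∈ G.neighborFinset i ∩ A, a i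
        + ∑ j ∈ G.neighborFinset i ∩ B, a i := by
    intro i
    have h1 : ∑ j ∈ G.neighborFinset i, a j = 1 := hds i
    have h2 : ∑ j ∈ G.neighborFinset i, a i = 1 := by
      rw [Finset.sum_const, nsmul_eq_mul, SimpleGraph.card_neighborFinset_eq_degree, ha]
      have hd : (G.degree i : ℝ) ≠ 0 := by
        have := hdeg i; positivity
      field_simp
    rw [← hsplit i a, ← hsplit i (fun _ => a i), h1, h2]
  have hkeyS := Finset.sum_congr rfl (fun i (_ : i ∈ S) => hkey i)
  rw [Finset.sum_add_distrib, Finset.sum_add_distrib, Finset.sum_add_distrib,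
    Finset.sum_add_distrib] at hkeyS
  -- S–S symmetry
  have hSS : ∑ i ∈ S, ∑ j ∈ G.neighborFinset i ∩ S, a j
      = ∑ i ∈ S, ∑ j ∈ G.neighborFinset i ∩ S, a i := by
    rw [swap_sum G S S (fun _ j => a j)]
  -- nonnegativity of the A term
  have hApos : 0 ≤ ∑ i ∈ S, ∑ j ∈ G.neighborFinset i ∩ A, a i := by
    apply Finset.sum_nonneg; intro i _
    apply Finset.sum_nonneg; intro j _
    exact hanonneg i
  linarith
end

section
/- (Theorem: exponential convergence of the mean-field ODE, part 1.) Fix an integer K ≥ 2, λ > 0, μ ∈ [0,1], and p₁ > p₂ ≥ ⋯ ≥ p_K ≥ 0, and let y : [0,∞) → ℝ^{K+1} be a simplex-valued solution of the mean-field ODE system with y₁(0) > 0. Then for all t ≥ 0, y₁(t) ≥ 1 − 1 / ( (y₁(0)/(1 − y₁(0))) · exp(R t) + 1 ), where R = λ · min{ (1 − μ + μ/K) p₁, p₁ − p₂ }. -/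
/-! Since `y₁ ≤ 1`, each unit of mass in `y₀` flows into `y₁` at rate at least
`λ (1 - μ + μ/K) p₁ y₁`, and each unit in `y_j`, `j ≥ 2`, at rate at least `λ (p₁ - p₂) y₁`.
As `1 - y₁` is the mass outside `y₁`, this makes `y₁` a supersolution of the logistic equation
`ẋ = R x (1 - x)`, and for such `x` the quantity `(1 - x) / x · exp (R t)` is nonincreasing. -/

open Finset Real

section Calculus

variable {f f' : ℝ → ℝ} {a : ℝ}

theorem monotoneOn_Ici_of_hasDerivAt_nonneg (hf : ∀ t, a ≤ t → HasDerivAt f (f' t) t)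
    (hf' : ∀ t, a ≤ t → 0 ≤ f' t) : MonotoneOn f (Set.Ici a) :=
  monotoneOn_of_hasDerivWithinAt_nonneg (convex_Ici a)
    (fun t ht => (hf t ht).continuousAt.continuousWithinAt)
    (fun t ht => (hf t (interior_subset ht)).hasDerivWithinAt)
    (fun t ht => hf' t (interior_subset ht))

theorem antitoneOn_Ici_of_hasDerivAt_nonpos (hf : ∀ t, a ≤ t → HasDerivAt f (f' t) t)
    (hf' : ∀ t, a ≤ t → f' t ≤ 0) : AntitoneOn f (Set.Ici a) :=
  antitoneOn_of_hasDerivWithinAt_nonpos (convex_Ici a)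
    (fun t ht => (hf t ht).continuousAt.continuousWithinAt)
    (fun t ht => (hf t (interior_subset ht)).hasDerivWithinAt)
    (fun t ht => hf' t (interior_subset ht))

end Calculus

section Logistic

variable {x : ℝ → ℝ} {x' R t : ℝ}

theorem hasDerivAt_inv_odds_mul_exp (hx : HasDerivAt x x' t) (hxt : x t ≠ 0) :
    HasDerivAt (fun s => (1 - x s) / x s * exp (R * s))
      (exp (R * t) / x t ^ 2 * (R * (x t * (1 - x t)) - x')) t := by
  have hexp : HasDerivAt (fun s => exp (R * s)) (exp (R * t) * R) t := by
    simpa using ((hasDerivAt_id t).const_mul R).exp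
  refine (((hx.const_sub 1).div hx hxt).mul hexp).congr_deriv ?_
  simp only [Pi.div_apply]
  field_simp
  ring

theorem le_of_inv_odds_mul_le {a b E : ℝ} (ha : 0 < a) (ha1 : a ≤ 1) (hb : 0 < b) (hE : 0 < E)
    (h : (1 - b) / b * E ≤ (1 - a) / a) : 1 - 1 / (a / (1 - a) * E + 1) ≤ b := by
  -- at `a = 1` the bound is `0`, since `1 / 0 = 0`
  rcases ha1.eq_or_lt with rfl | ha1
  · simpa using hb.le
  have hden : 0 < a / (1 - a) * E + 1 := by positivity
  rw [div_mul_eq_mul_div, div_le_div_iff₀ hb ha] at h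
  rw [sub_le_comm, le_div_iff₀ hden]
  field_simp
  nlinarith

/-- The bound is the logistic curve `x' = R x (1 - x)` through `x 0`. -/
theorem logistic_lower_bound {x x' : ℝ → ℝ} (hR : 0 ≤ R)
    (hx : ∀ t, 0 ≤ t → HasDerivAt x (x' t) t) (hx_mem : ∀ t, 0 ≤ t → x t ∈ Set.Icc 0 1)
    (hx' : ∀ t, 0 ≤ t → R * (x t * (1 - x t)) ≤ x' t) (hx₀ : 0 < x 0) (ht : 0 ≤ t) :
    1 - 1 / (x 0 / (1 - x 0) * exp (R * t) + 1) ≤ x t := by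
  have hx_mono : MonotoneOn x (Set.Ici 0) :=
    monotoneOn_Ici_of_hasDerivAt_nonneg hx fun s hs =>
      (mul_nonneg hR (mul_nonneg (hx_mem s hs).1 (sub_nonneg.2 (hx_mem s hs).2))).trans (hx' s hs)
  have hx_pos : ∀ s, 0 ≤ s → 0 < x s := fun s hs =>
    hx₀.trans_le (hx_mono Set.self_mem_Ici hs hs)
  have hodds_anti : AntitoneOn (fun s => (1 - x s) / x s * exp (R * s)) (Set.Ici 0) :=
    antitoneOn_Ici_of_hasDerivAt_nonpos
      (fun s hs => hasDerivAt_inv_odds_mul_exp (hx s hs) (hx_pos s hs).ne')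
      fun s hs => mul_nonpos_of_nonneg_of_nonpos (by positivity) (sub_nonpos.2 (hx' s hs))
  refine le_of_inv_odds_mul_le hx₀ (hx_mem 0 le_rfl).2 (hx_pos t ht) (exp_pos _) ?_
  simpa using hodds_anti Set.self_mem_Ici ht ht

end Logistic

section MeanField

variable {K : ℕ} {z : ℕ → ℝ}

theorem sum_Icc_one_eq_add_sum_Icc_two (hK : 1 ≤ K) (f : ℕ → ℝ) :
    ∑ j ∈ Icc 1 K, f j = f 1 + ∑ j ∈ Icc 2 K, f j := by
  rw [← add_sum_Ioc_eq_sum_Icc hK, ← Icc_add_one_left_eq_Ioc]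
  rfl

theorem sum_range_succ_eq_add_sum_Icc_one (f : ℕ → ℝ) :
    ∑ k ∈ range (K + 1), f k = f 0 + ∑ j ∈ Icc 1 K, f j := by
  rw [Nat.range_succ_eq_Icc_zero, ← add_sum_Ioc_eq_sum_Icc K.zero_le, ← Icc_add_one_left_eq_Ioc]
  rfl

def InSimplex (K : ℕ) (z : ℕ → ℝ) : Prop :=
  (∀ k ≤ K, 0 ≤ z k) ∧ ∑ k ∈ range (K + 1), z k = 1

noncomputable def meanFieldDrift (K : ℕ) (lam μ : ℝ) (p z : ℕ → ℝ) (k : ℕ) : ℝ :=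
  lam * z 0 * (μ / K) * p k
    + lam * z k * ((1 - μ) * p k * z 0 + ∑ j ∈ Icc 1 K, (p k - p j) * z j)

namespace InSimplex

theorem sum_Icc_two_nonneg (hz : InSimplex K z) : 0 ≤ ∑ j ∈ Icc 2 K, z j :=
  sum_nonneg fun j hj => hz.1 j (mem_Icc.1 hj).2

theorem one_sub_eq (hz : InSimplex K z) (hK : 1 ≤ K) :
    1 - z 1 = z 0 + ∑ j ∈ Icc 2 K, z j := by
  have h := hz.2
  rw [sum_range_succ_eq_add_sum_Icc_one, sum_Icc_one_eq_add_sum_Icc_two hK] at h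
  linarith

theorem le_one (hz : InSimplex K z) (hK : 1 ≤ K) : z 1 ≤ 1 := by
  linarith [hz.one_sub_eq hK, hz.1 0 K.zero_le, hz.sum_Icc_two_nonneg]

theorem logistic_le_meanFieldDrift_one (hz : InSimplex K z) (hK : 1 ≤ K)
    {lam μ : ℝ} {p : ℕ → ℝ} (hlam : 0 ≤ lam) (hμ : 0 ≤ μ) (hp1 : 0 ≤ p 1)
    (hp : ∀ j ∈ Icc 2 K, p j ≤ p 2) :
    lam * min ((1 - μ + μ / K) * p 1) (p 1 - p 2) * (z 1 * (1 - z 1))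
      ≤ meanFieldDrift K lam μ p z 1 := by
  set S := ∑ j ∈ Icc 2 K, z j
  have hz0 := hz.1 0 K.zero_le
  have hz1 := hz.1 1 hK
  have hS : 0 ≤ S := hz.sum_Icc_two_nonneg
  have hμK : 0 ≤ μ / K := by positivity
  have hgap : (p 1 - p 2) * S ≤ ∑ j ∈ Icc 2 K, (p 1 - p j) * z j := by
    rw [mul_sum]
    exact sum_le_sum fun j hj =>
      mul_le_mul_of_nonneg_right (by linarith [hp j hj]) (hz.1 j (mem_Icc.1 hj).2)
  have hdrift : meanFieldDrift K lam μ p z 1 = lam * z 0 * (μ / K) * p 1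
      + lam * z 1 * ((1 - μ) * p 1 * z 0 + ∑ j ∈ Icc 2 K, (p 1 - p j) * z j) := by
    simp [meanFieldDrift, sum_Icc_one_eq_add_sum_Icc_two hK]
  have hmin₁ := min_le_left ((1 - μ + μ / K) * p 1) (p 1 - p 2)
  have hmin₂ := min_le_right ((1 - μ + μ / K) * p 1) (p 1 - p 2)
  rw [hdrift, hz.one_sub_eq hK]
  calc lam * min ((1 - μ + μ / K) * p 1) (p 1 - p 2) * (z 1 * (z 0 + S))
      ≤ lam * ((1 - μ + μ / K) * p 1) * (z 1 * z 0) + lam * (p 1 - p 2) * (z 1 * S) := by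
        rw [mul_add, mul_add]
        gcongr
    _ ≤ lam * z 0 * (μ / K) * p 1
        + lam * z 1 * ((1 - μ) * p 1 * z 0 + ∑ j ∈ Icc 2 K, (p 1 - p j) * z j) := by
        have : lam * z 0 * (μ / K) * p 1 * z 1 ≤ lam * z 0 * (μ / K) * p 1 :=
          mul_le_of_le_one_right (by positivity) (hz.le_one hK)
        have : lam * z 1 * ((p 1 - p 2) * S) ≤ lam * z 1 * ∑ j ∈ Icc 2 K, (p 1 - p j) * z j :=
          mul_le_mul_of_nonneg_left hgap (by positivity)
        linarith

end InSimplex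

end MeanField

theorem meanfield_ode_exponential_convergence_part1_general
    (K : ℕ) (hK : 2 ≤ K) (lam μ : ℝ) (hlam : 0 < lam) (hμ0 : 0 ≤ μ) (hμ1 : μ ≤ 1)
    (p : ℕ → ℝ) (hp12 : p 2 < p 1)
    (hpmono : ∀ j, 2 ≤ j → j < K → p (j + 1) ≤ p j) (hpK : 0 ≤ p K)
    (y : ℝ → ℕ → ℝ)
    (hodek : ∀ k, 1 ≤ k → k ≤ K → ∀ t, 0 ≤ t → HasDerivAt (fun s => y s k)
      (lam * y t 0 * (μ / K) * p k
        + lam * y t k * ((1 - μ) * p k * y t 0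
          + ∑ j ∈ Finset.Icc 1 K, (p k - p j) * y t j)) t)
    (hsimplex : ∀ t, 0 ≤ t →
      (∀ k ≤ K, 0 ≤ y t k) ∧ ∑ k ∈ Finset.range (K + 1), y t k = 1)
    (hy1 : 0 < y 0 1)
    (R : ℝ) (hR : R = lam * min ((1 - μ + μ / K) * p 1) (p 1 - p 2)) :
    ∀ t, 0 ≤ t →
      1 - 1 / ((y 0 1 / (1 - y 0 1)) * Real.exp (R * t) + 1) ≤ y t 1 := by
  have hK1 : 1 ≤ K := by omega
  have hp_anti : AntitoneOn p (Set.Icc 2 K) :=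
    antitoneOn_of_succ_le Set.ordConnected_Icc fun j _ hj hj' =>
      hpmono j hj.1 (Order.succ_le_iff.1 hj'.2)
  have hp_le : ∀ j ∈ Icc 2 K, p j ≤ p 2 := fun j hj =>
    hp_anti ⟨le_rfl, hK⟩ (mem_Icc.1 hj) (mem_Icc.1 hj).1
  have hp1 : 0 ≤ p 1 := (hpK.trans (hp_le K (mem_Icc.2 ⟨hK, le_rfl⟩))).trans hp12.le
  have hR0 : 0 ≤ R := by
    have : 0 ≤ μ / K := by positivity
    rw [hR]
    exact mul_nonneg hlam.le (le_min (mul_nonneg (by linarith) hp1) (by linarith))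
  intro t ht
  refine logistic_lower_bound hR0 (hodek 1 le_rfl hK1)
    (fun s hs => ⟨(hsimplex s hs).1 1 hK1, InSimplex.le_one (hsimplex s hs) hK1⟩)
    (fun s hs => ?_) hy1 ht
  rw [hR]
  exact InSimplex.logistic_le_meanFieldDrift_one (hsimplex s hs) hK1 hlam.le hμ0 hp1 hp_le

/-- Exponential convergence of the mean-field ODE, part 1: if `y` is a simplex-valued
solution of the mean-field ODE system with `y₁(0) > 0`, then for all `t ≥ 0`,
`y₁(t) ≥ 1 − 1/((y₁(0)/(1 − y₁(0))) exp(Rt) + 1)` where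
`R = λ min{(1 − μ + μ/K)p₁, p₁ − p₂}`. -/
theorem meanfield_ode_exponential_convergence_part1
    (K : ℕ) (hK : 2 ≤ K) (lam μ : ℝ) (hlam : 0 < lam) (hμ0 : 0 ≤ μ) (hμ1 : μ ≤ 1)
    (p : ℕ → ℝ) (hp12 : p 2 < p 1)
    (hpmono : ∀ j, 2 ≤ j → j < K → p (j + 1) ≤ p j) (hpK : 0 ≤ p K)
    (y : ℝ → ℕ → ℝ)
    (hode0 : ∀ t, 0 ≤ t → HasDerivAt (fun s => y s 0)
      (-(lam * y t 0 * ((μ / K) * ∑ j ∈ Finset.Icc 1 K, p j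
        + (1 - μ) * ∑ j ∈ Finset.Icc 1 K, p j * y t j))) t)
    (hodek : ∀ k, 1 ≤ k → k ≤ K → ∀ t, 0 ≤ t → HasDerivAt (fun s => y s k)
      (lam * y t 0 * (μ / K) * p k
        + lam * y t k * ((1 - μ) * p k * y t 0
          + ∑ j ∈ Finset.Icc 1 K, (p k - p j) * y t j)) t)
    (hsimplex : ∀ t, 0 ≤ t →
      (∀ k ≤ K, 0 ≤ y t k) ∧ ∑ k ∈ Finset.range (K + 1), y t k = 1)
    (hy1 : 0 < y 0 1)
    (R : ℝ) (hR : R = lam * min ((1 - μ + μ / K) * p 1) (p 1 - p 2)) :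
    ∀ t, 0 ≤ t →
      1 - 1 / ((y 0 1 / (1 - y 0 1)) * Real.exp (R * t) + 1) ≤ y t 1 :=
  meanfield_ode_exponential_convergence_part1_general K hK lam μ hlam hμ0 hμ1 p hp12 hpmono hpK y
    hodek hsimplex hy1 R hR
end

section
/- (Logistic comparison bound.) Let R > 0 and let w : [0,∞) → ℝ be a differentiable function with 0 ≤ w(t) ≤ 1 for all t ≥ 0, w(0) ∈ (0,1), and w′(t) ≥ R (1 − w(t)) w(t) for all t ≥ 0. Then for all t ≥ 0, w(t) ≥ 1 − 1 / ( (w(0)/(1 − w(0))) · exp(R t) + 1 ). -/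
open Real Set

/-!
Since `w' ≥ R (1 - w) w`, the odds `w / (1 - w)` grow at least like `exp (R t)`. To avoid
dividing by `1 - w`, which may vanish, one shows instead that
`q = (1 - w) (c exp (R t) + 1)`, with `c` the initial odds, stays `≤ 1`: wherever `q > 1`,
`q' ≤ R (1 - w) (q - 1) ≤ R (q - 1)`, and a function that starts `≤ 0` and grows at most
exponentially while positive never becomes positive (compare with the barrier `ε exp ((K + 1) t)`).
-/

theorem nonpos_of_deriv_le_mul_of_pos {f f' : ℝ → ℝ} {a b K : ℝ}
    (hf : ContinuousOn f (Icc a b)) (hf' : ∀ x ∈ Ico a b, HasDerivWithinAt f (f' x) (Ici x) x)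
    (ha : f a ≤ 0) (bound : ∀ x ∈ Ico a b, 0 < f x → f' x ≤ K * f x) :
    ∀ ⦃x⦄, x ∈ Icc a b → f x ≤ 0 := by
  intro x hx
  have barrier : ∀ ε > 0, f x ≤ ε * exp ((K + 1) * (x - a)) := by
    intro ε hε
    refine image_le_of_deriv_right_lt_deriv_boundary hf hf'
      (B := fun y => ε * exp ((K + 1) * (y - a)))
      (B' := fun y => (K + 1) * (ε * exp ((K + 1) * (y - a))))
      ?_ (fun y => ?_) (fun y hy hfy => ?_) hx
    · simpa using ha.trans hε.le
    · exact ((((hasDerivAt_id' y).sub_const a).const_mul (K + 1)).exp.const_mul ε).congr_deriv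
        (by ring)
    · have hB : 0 < ε * exp ((K + 1) * (y - a)) := by positivity
      have hgrowth := bound y hy (hfy ▸ hB)
      rw [hfy] at hgrowth
      linarith
  refine le_of_forall_pos_le_add fun ε hε => ?_
  have hE : 0 < exp ((K + 1) * (x - a)) := exp_pos _
  simpa [div_mul_cancel₀ _ hE.ne'] using barrier (ε / exp ((K + 1) * (x - a))) (by positivity)

theorem one_sub_mul_exp_add_one_le_one_of_logistic_drift {R c : ℝ} {w w' : ℝ → ℝ}
    (hR : 0 ≤ R) (hc : 0 ≤ c) (hderiv : ∀ t, 0 ≤ t → HasDerivAt w (w' t) t)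
    (hw : ∀ t, 0 ≤ t → 0 ≤ w t) (hdrift : ∀ t, 0 ≤ t → R * (1 - w t) * w t ≤ w' t)
    (hinit : (1 - w 0) * (c + 1) ≤ 1) :
    ∀ t, 0 ≤ t → (1 - w t) * (c * exp (R * t) + 1) ≤ 1 := by
  intro t ht
  set q : ℝ → ℝ := fun s => (1 - w s) * (c * exp (R * s) + 1) - 1
  set q' : ℝ → ℝ := fun s => -w' s * (c * exp (R * s) + 1) + (1 - w s) * (c * (R * exp (R * s)))
  have hq : ∀ s, 0 ≤ s → HasDerivAt q (q' s) s := fun s hs =>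
    (((hderiv s hs).const_sub 1).mul
      ((((hasDerivAt_id' s).const_mul R).exp.const_mul c).add_const 1)).sub_const 1 |>.congr_deriv
      (by ring)
  have hq_growth : ∀ s, 0 ≤ s → 0 < q s → q' s ≤ R * q s := by
    intro s hs hqs
    have hD : 0 < c * exp (R * s) + 1 := by positivity
    have hq'_le : q' s ≤ R * (1 - w s) * q s := by
      nlinarith [mul_le_mul_of_nonneg_right (hdrift s hs) hD.le]
    nlinarith [mul_nonneg (mul_nonneg hR (hw s hs)) hqs.le]
  have hq_nonpos := nonpos_of_deriv_le_mul_of_pos (f := q) (a := 0) (b := t)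
    (fun s hs => (hq s hs.1).continuousAt.continuousWithinAt)
    (fun s hs => (hq s hs.1).hasDerivWithinAt) (by simpa [q] using hinit)
    (fun s hs => hq_growth s hs.1) ⟨ht, le_rfl⟩
  simpa [q] using hq_nonpos

theorem logistic_comparison_bound_general
    (R : ℝ) (hR : 0 < R) (w w' : ℝ → ℝ)
    (hderiv : ∀ t, 0 ≤ t → HasDerivAt w (w' t) t)
    (hbounds : ∀ t, 0 ≤ t → 0 ≤ w t ∧ w t ≤ 1)
    (h1 : w 0 < 1)
    (hdrift : ∀ t, 0 ≤ t → R * (1 - w t) * w t ≤ w' t) :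
    ∀ t, 0 ≤ t → 1 - 1 / ((w 0 / (1 - w 0)) * Real.exp (R * t) + 1) ≤ w t := by
  intro t ht
  have h1' : 0 < 1 - w 0 := sub_pos.mpr h1
  have hc : 0 ≤ w 0 / (1 - w 0) := div_nonneg (hbounds 0 le_rfl).1 h1'.le
  have hinit : (1 - w 0) * (w 0 / (1 - w 0) + 1) ≤ 1 := by
    rw [mul_add, mul_div_cancel₀ _ h1'.ne']; linarith
  have hq := one_sub_mul_exp_add_one_le_one_of_logistic_drift hR.le hc hderiv
    (fun s hs => (hbounds s hs).1) hdrift hinit t ht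
  have hD : 0 < w 0 / (1 - w 0) * exp (R * t) + 1 := by positivity
  rwa [sub_le_comm, le_div_iff₀ hD]

/-- Logistic comparison bound: if `R > 0` and `w : [0,∞) → ℝ` is differentiable with
`0 ≤ w(t) ≤ 1`, `w(0) ∈ (0,1)`, and `w′(t) ≥ R(1 − w(t))w(t)` for all `t ≥ 0`, then
`w(t) ≥ 1 − 1/((w(0)/(1 − w(0))) exp(Rt) + 1)` for all `t ≥ 0`. -/
theorem logistic_comparison_bound
    (R : ℝ) (hR : 0 < R) (w w' : ℝ → ℝ)
    (hderiv : ∀ t, 0 ≤ t → HasDerivAt w (w' t) t)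
    (hbounds : ∀ t, 0 ≤ t → 0 ≤ w t ∧ w t ≤ 1)
    (h0 : 0 < w 0) (h1 : w 0 < 1)
    (hdrift : ∀ t, 0 ≤ t → R * (1 - w t) * w t ≤ w' t) :
    ∀ t, 0 ≤ t → 1 - 1 / ((w 0 / (1 - w 0)) * Real.exp (R * t) + 1) ≤ w t :=
  logistic_comparison_bound_general R hR w w' hderiv hbounds h1 hdrift
end
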